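/- A single bouquet B of a simple hypergraph H, namely a partial hypergraph whose edges have nonempty common intersection equipped with flowers ℓ_i ∈ E_j iff i = j, forms (as a singleton set {B}) a semi-strongly disjoint set of bouquets of H whenever V(B) \ F(B) is independent in H; in this case its flower set extends to a minimal vertex cover of H of size at least the number of edges of B, hence α₀'(H) ≥ |E(B)|. -/

import Mathlib

open Finset

structure SimpleHypergraph (α : Type*) [DecidableEq α] where
  edges : Finset (Finset α)
  nonempty_edges : ∀ E ∈ edges, E.Nonempty
  antichain : ∀ E ∈ edges, ∀ F ∈ edges, E ⊆ F → E = F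

namespace SimpleHypergraph

variable {α : Type*} [DecidableEq α]

/-- The vertex set of a simple hypergraph: the union of its edges. -/
def verts (H : SimpleHypergraph α) : Finset α := H.edges.sup id

/-- `C` is a vertex cover: every edge meets `C`. -/
def IsCover (H : SimpleHypergraph α) (C : Finset α) : Prop :=
  ∀ E ∈ H.edges, ∃ v ∈ E, v ∈ C

/-- `C` is a minimal vertex cover. -/
def IsMinCover (H : SimpleHypergraph α) (C : Finset α) : Prop :=
  H.IsCover C ∧ ∀ D ⊂ C, ¬ H.IsCover D

/-- `A` is independent: it contains no edge. -/
def Indep (H : SimpleHypergraph α) (A : Finset α) : Prop :=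
  ∀ E ∈ H.edges, ¬ E ⊆ A

/-- The partial hypergraph of `H` on a vertex subset `U`. -/
def restrict (H : SimpleHypergraph α) (U : Finset α) : SimpleHypergraph α where
  edges := H.edges.filter (· ⊆ U)
  nonempty_edges := fun E hE => H.nonempty_edges E (Finset.mem_filter.mp hE).1
  antichain := fun E hE F hF h =>
    H.antichain E (Finset.mem_filter.mp hE).1 F (Finset.mem_filter.mp hF).1 h

/-- The maximum cardinality of a minimal vertex cover (big height). -/
noncomputable def alpha0' (H : SimpleHypergraph α) : ℕ :=
  sSup {n : ℕ | ∃ C : Finset α, H.IsMinCover C ∧ n = C.card}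

/-- A bouquet of `H`: a partial hypergraph whose edges have a common vertex,
with a designated flower in each edge belonging to no other edge. -/
structure BouquetOf (H : SimpleHypergraph α) where
  edges : Finset (Finset α)
  edges_nonempty : edges.Nonempty
  subset : edges ⊆ H.edges
  core : ∃ v, ∀ E ∈ edges, v ∈ E
  flower : Finset α → α
  flower_spec : ∀ E ∈ edges, ∀ F ∈ edges, (flower E ∈ F ↔ E = F)

def BouquetOf.flowers {H : SimpleHypergraph α} (B : H.BouquetOf) : Finset α :=
  B.edges.image B.flower

def BouquetOf.verts {H : SimpleHypergraph α} (B : H.BouquetOf) : Finset α :=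
  B.edges.sup id

/-- The union of the edge sets of a finite family of bouquets. -/
def famEdges {H : SimpleHypergraph α} {j : ℕ} (B : Fin j → H.BouquetOf) :
    Finset (Finset α) := Finset.univ.sup fun i => (B i).edges

/-- The union of the flower sets of a finite family of bouquets. -/
def famFlowers {H : SimpleHypergraph α} {j : ℕ} (B : Fin j → H.BouquetOf) :
    Finset α := Finset.univ.sup fun i => (B i).flowers

/-- The union of the vertex sets of a finite family of bouquets. -/
def famVerts {H : SimpleHypergraph α} {j : ℕ} (B : Fin j → H.BouquetOf) :
    Finset α := Finset.univ.sup fun i => (B i).verts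

/-- A semi-strongly disjoint family of bouquets of `H`. -/
def SSD (H : SimpleHypergraph α) {j : ℕ} (B : Fin j → H.BouquetOf) : Prop :=
  (∀ p q : Fin j, p ≠ q → ∀ E ∈ (B p).edges, ∀ f ∈ (B q).flowers, f ∉ E) ∧
  H.Indep (famVerts B \ famFlowers B)

/-- `d'_H`: the maximum of `|E(𝓑)|` over semi-strongly disjoint sets of bouquets. -/
noncomputable def dPrime (H : SimpleHypergraph α) : ℕ :=
  sSup {n : ℕ | ∃ (j : ℕ) (B : Fin j → H.BouquetOf), H.SSD B ∧ n = (famEdges B).card}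

end SimpleHypergraph

/-!
Since `V(B) \ F(B)` is independent, its complement in `V(H)` is a vertex cover, and we shrink it
to a minimal cover `C`. Each edge `E` of `B` lies in `V(B)`, so `C` meets it in a flower, and the
only flower in `E` is `ℓ_E`; hence `C` contains the `|E(B)|` distinct flowers of `B`.
-/

namespace SimpleHypergraph

variable {α : Type*} [DecidableEq α] {H : SimpleHypergraph α}

theorem isMinCover_iff_minimal {C : Finset α} : H.IsMinCover C ↔ Minimal H.IsCover C :=
  minimal_iff_forall_lt.symm

theorem IsCover.exists_isMinCover_subset {C : Finset α} (hC : H.IsCover C) :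
    ∃ D ⊆ C, H.IsMinCover D := by
  obtain ⟨D, hDC, hD⟩ := exists_minimal_le_of_wellFoundedLT H.IsCover C hC
  exact ⟨D, hDC, isMinCover_iff_minimal.mpr hD⟩

theorem isCover_sdiff_of_indep {A : Finset α} (hA : H.Indep A) : H.IsCover (H.verts \ A) := by
  intro E hE
  obtain ⟨v, hvE, hvA⟩ := not_subset.mp (hA E hE)
  exact ⟨v, hvE, mem_sdiff.mpr ⟨mem_sup.mpr ⟨E, hE, hvE⟩, hvA⟩⟩

theorem IsMinCover.subset_verts {C : Finset α} (hC : H.IsMinCover C) : C ⊆ H.verts := by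
  intro v hvC
  by_contra hv
  refine hC.2 (C.erase v) (erase_ssubset hvC) fun E hE => ?_
  obtain ⟨w, hwE, hwC⟩ := hC.1 E hE
  have hwv : w ≠ v := by
    rintro rfl
    exact hv (mem_sup.mpr ⟨E, hE, hwE⟩)
  exact ⟨w, hwE, mem_erase.mpr ⟨hwv, hwC⟩⟩

theorem IsMinCover.card_le_alpha0' {C : Finset α} (hC : H.IsMinCover C) :
    C.card ≤ H.alpha0' := by
  have hbdd : BddAbove {n : ℕ | ∃ C : Finset α, H.IsMinCover C ∧ n = C.card} :=
    ⟨H.verts.card, by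
      rintro n ⟨D, hD, rfl⟩
      exact card_le_card hD.subset_verts⟩
  exact le_csSup hbdd ⟨C, hC, rfl⟩

namespace BouquetOf

variable (B : H.BouquetOf)

theorem flower_mem {E : Finset α} (hE : E ∈ B.edges) : B.flower E ∈ E :=
  (B.flower_spec E hE E hE).mpr rfl

theorem mem_verts {v : α} : v ∈ B.verts ↔ ∃ E ∈ B.edges, v ∈ E := by
  simp [BouquetOf.verts]

theorem card_flowers : B.flowers.card = B.edges.card :=
  card_image_of_injOn fun E hE F hF hEF =>
    (B.flower_spec E hE F hF).mp (hEF ▸ B.flower_mem hF)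

theorem flowers_subset_of_isCover {D : Finset α} (hD : H.IsCover D)
    (hdisj : Disjoint D (B.verts \ B.flowers)) : B.flowers ⊆ D := by
  intro f hf
  obtain ⟨E, hE, rfl⟩ := mem_image.mp hf
  obtain ⟨v, hvE, hvD⟩ := hD E (B.subset hE)
  have hvfl : v ∈ B.flowers := by
    by_contra hv
    exact disjoint_left.mp hdisj hvD (mem_sdiff.mpr ⟨B.mem_verts.mpr ⟨E, hE, hvE⟩, hv⟩)
  obtain ⟨F, hF, rfl⟩ := mem_image.mp hvfl
  rwa [← (B.flower_spec F hF E hE).mp hvE]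

theorem exists_isMinCover_flowers_subset (hind : H.Indep (B.verts \ B.flowers)) :
    ∃ C, H.IsMinCover C ∧ B.flowers ⊆ C := by
  obtain ⟨C, hC₀, hC⟩ := (isCover_sdiff_of_indep hind).exists_isMinCover_subset
  refine ⟨C, hC, B.flowers_subset_of_isCover hC.1 ?_⟩
  exact disjoint_of_subset_left hC₀ sdiff_disjoint

theorem ssd_singleton_iff : H.SSD (fun _ : Fin 1 => B) ↔ H.Indep (B.verts \ B.flowers) := by
  simp [SSD, famVerts, famFlowers]

end BouquetOf

end SimpleHypergraph

open SimpleHypergraph in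
/-- a single bouquet `B` of `H` with `V(B) \ F(B)` independent in
`H` forms a semi-strongly disjoint singleton set of bouquets; its flower set
extends to a minimal vertex cover of size at least `|E(B)|`, so
`α₀'(H) ≥ |E(B)|`. -/
theorem stmt12 {α : Type*} [DecidableEq α] (H : SimpleHypergraph α)
    (B : H.BouquetOf) (hind : H.Indep (B.verts \ B.flowers)) :
    H.SSD (fun _ : Fin 1 => B) ∧
    (∃ C : Finset α, H.IsMinCover C ∧ B.flowers ⊆ C ∧ B.edges.card ≤ C.card) ∧
    B.edges.card ≤ H.alpha0' := by
  obtain ⟨C, hC, hflC⟩ := B.exists_isMinCover_flowers_subset hind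
  have hcard : B.edges.card ≤ C.card := B.card_flowers ▸ card_le_card hflC
  exact ⟨B.ssd_singleton_iff.mpr hind, ⟨C, hC, hflC, hcard⟩, hcard.trans hC.card_le_alpha0'⟩
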